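/- Suppose ṗ(t) = s m(ψ(t)) + w with s > 0 constant, w ∈ ℝ² constant, m(ψ) = (cos ψ, sin ψ), and ṗ(t) ≠ 0 for all t. Let v̂ = ṗ/‖ṗ‖. Then d v̂/dt = −(s ψ̇/‖ṗ‖)(v̂ᵀ m(ψ)) E v̂, where E = [[0,1],[-1,0]]. -/

import Mathlib

open RealInnerProductSpace

/-- Action of the rotation matrix `E = !![0, 1; -1, 0]` on a vector of `ℝ²`. -/
noncomputable def Emap (v : EuclideanSpace ℝ (Fin 2)) : EuclideanSpace ℝ (Fin 2) :=
  WithLp.toLp 2 ![v 1, -v 0]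

/-- The unit-heading vector `m ψ = (cos ψ, sin ψ)`. -/
noncomputable def mvec (ψ : ℝ) : EuclideanSpace ℝ (Fin 2) := WithLp.toLp 2 ![Real.cos ψ, Real.sin ψ]

/-! Differentiating `v / ‖v‖` gives `‖v‖⁻¹` times the component of `v̇` orthogonal to `v̂`, which in
the plane is `⟪E v̂, v̇⟫ E v̂`. Since `ṁ(ψ) = -ψ̇ E m(ψ)` and `E` is an isometry,
`⟪E v̂, v̇⟫ = -s ψ̇ ⟪v̂, m(ψ)⟫`. -/

section Normalize

variable {F : Type*} [NormedAddCommGroup F] [InnerProductSpace ℝ F] {f : ℝ → F} {f' : F} {x : ℝ}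

theorem HasDerivAt.norm (hf : HasDerivAt f f' x) (h0 : f x ≠ 0) :
    HasDerivAt (‖f ·‖) (⟪f x, f'⟫ / ‖f x‖) x := by
  have hsq : ‖f x‖ ^ 2 ≠ 0 := by positivity
  convert hf.norm_sq.sqrt hsq using 1
  · simp only [Real.sqrt_sq (norm_nonneg _)]
  · rw [Real.sqrt_sq (norm_nonneg _)]
    ring

theorem HasDerivAt.inv_norm_smul (hf : HasDerivAt f f' x) (h0 : f x ≠ 0) :
    HasDerivAt (fun y ↦ ‖f y‖⁻¹ • f y)
      (‖f x‖⁻¹ • (f' - ⟪‖f x‖⁻¹ • f x, f'⟫ • (‖f x‖⁻¹ • f x))) x := by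
  have hn : ‖f x‖ ≠ 0 := norm_ne_zero_iff.mpr h0
  refine (((hf.norm h0).inv hn).smul hf).congr_deriv ?_
  simp only [inner_smul_left, RCLike.conj_to_real, smul_sub, smul_smul]
  rw [sub_eq_add_neg, ← neg_smul]
  congr 2
  field_simp

end Normalize

theorem inner_Emap_Emap (y z : EuclideanSpace ℝ (Fin 2)) : ⟪Emap y, Emap z⟫ = ⟪y, z⟫ := by
  simp [Emap, PiLp.inner_apply, Fin.sum_univ_two]; ring

theorem sub_inner_smul_eq_inner_Emap_smul {u : EuclideanSpace ℝ (Fin 2)} (hu : ‖u‖ = 1)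
    (y : EuclideanSpace ℝ (Fin 2)) : y - ⟪u, y⟫ • u = ⟪Emap u, y⟫ • Emap u := by
  have h : u 0 ^ 2 + u 1 ^ 2 = 1 := by
    simpa [EuclideanSpace.norm_eq, Fin.sum_univ_two, Real.sqrt_eq_one] using hu
  ext i; fin_cases i <;> simp [Emap, PiLp.inner_apply, Fin.sum_univ_two]
  · linear_combination -y 0 * h
  · linear_combination -y 1 * h

theorem mvec_eq_cos_smul_add_sin_smul (ψ : ℝ) :
    mvec ψ = Real.cos ψ • EuclideanSpace.single 0 1 + Real.sin ψ • EuclideanSpace.single 1 1 := by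
  ext i; fin_cases i <;> simp [mvec]

theorem hasDerivAt_mvec (ψ : ℝ) : HasDerivAt mvec (-Emap (mvec ψ)) ψ := by
  refine ((((Real.hasDerivAt_cos ψ).smul_const _).add
    ((Real.hasDerivAt_sin ψ).smul_const _)).congr_deriv ?_).congr_of_eventuallyEq
    (.of_forall mvec_eq_cos_smul_add_sin_smul)
  ext i; fin_cases i <;> simp [Emap, mvec]

theorem stmt12_general (s : ℝ) (w : EuclideanSpace ℝ (Fin 2))
    (ψ : ℝ → ℝ) (ψ' : ℝ → ℝ) (hψ : ∀ t, HasDerivAt ψ (ψ' t) t)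
    (v : ℝ → EuclideanSpace ℝ (Fin 2)) (hv : ∀ t, v t = s • mvec (ψ t) + w)
    (hnz : ∀ t, v t ≠ 0)
    (vhat : ℝ → EuclideanSpace ℝ (Fin 2)) (hvhat : ∀ t, vhat t = ‖v t‖⁻¹ • v t) :
    ∀ t, HasDerivAt vhat
      (-((s * ψ' t / ‖v t‖) * ⟪vhat t, mvec (ψ t)⟫) • Emap (vhat t)) t := by
  intro t
  have hv' : HasDerivAt v (-(s * ψ' t) • Emap (mvec (ψ t))) t := by
    refine ((((hasDerivAt_mvec (ψ t)).scomp t (hψ t)).const_smul s).add_const w).congr_deriv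
      ?_ |>.congr_of_eventuallyEq (.of_forall hv)
    simp only [smul_neg, smul_smul, neg_smul]
  have hunit : ‖vhat t‖ = 1 := by
    rw [hvhat, norm_smul, norm_inv, norm_norm, inv_mul_cancel₀ (norm_ne_zero_iff.mpr (hnz t))]
  refine ((hv'.inv_norm_smul (hnz t)).congr_deriv ?_).congr_of_eventuallyEq (.of_forall hvhat)
  rw [← hvhat, sub_inner_smul_eq_inner_Emap_smul hunit, inner_smul_right, inner_Emap_Emap,
    smul_smul]
  congr 1
  ring

theorem stmt12 (s : ℝ) (hs : 0 < s) (w : EuclideanSpace ℝ (Fin 2))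
    (ψ : ℝ → ℝ) (ψ' : ℝ → ℝ) (hψ : ∀ t, HasDerivAt ψ (ψ' t) t)
    (v : ℝ → EuclideanSpace ℝ (Fin 2)) (hv : ∀ t, v t = s • mvec (ψ t) + w)
    (hnz : ∀ t, v t ≠ 0)
    (vhat : ℝ → EuclideanSpace ℝ (Fin 2)) (hvhat : ∀ t, vhat t = ‖v t‖⁻¹ • v t) :
    ∀ t, HasDerivAt vhat
      (-((s * ψ' t / ‖v t‖) * ⟪vhat t, mvec (ψ t)⟫) • Emap (vhat t)) t :=
  stmt12_general s w ψ ψ' hψ v hv hnz vhat hvhat
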